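/- Let A be a (possibly non-unital) associative K-algebra, (V; ρ, μ) a representation of A, B : V → A a relative Rota-Baxter operator of weight 0, and let u ∘ v = ρ(B(u))v + μ(B(v))u be the induced associative product on V. Define η^B, ξ^B : V → End(A) by η^B(u)(x) = B(u)·x − B(μ(x)u) and ξ^B(u)(x) = x·B(u) − B(ρ(x)u). Then (A; η^B, ξ^B) is a representation of the associative algebra (V, ∘); that is, for all u, v ∈ V: η^B(u ∘ v) = η^B(u)∘η^B(v), ξ^B(u ∘ v) = ξ^B(v)∘ξ^B(u), and η^B(u)∘ξ^B(v) = ξ^B(v)∘η^B(u). -/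
import Mathlib


/-- The product `u ∘ v = ρ(B(u))v + μ(B(v))u` on `V` induced by a relative
Rota-Baxter operator `B`. -/
def circB {K : Type*} [Field K] {A V : Type*}
    [AddCommGroup A] [Module K A] [AddCommGroup V] [Module K V]
    (ρ μ : A →ₗ[K] V →ₗ[K] V) (B : V →ₗ[K] A) (u v : V) : V :=
  ρ (B u) v + μ (B v) u

/-- `η^B(u)(x) = B(u)·x − B(μ(x)u)`. -/
def etaB {K : Type*} [Field K] {A V : Type*}
    [AddCommGroup A] [Module K A] [AddCommGroup V] [Module K V]
    (m : A →ₗ[K] A →ₗ[K] A) (μ : A →ₗ[K] V →ₗ[K] V) (B : V →ₗ[K] A)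
    (u : V) (x : A) : A :=
  m (B u) x - B (μ x u)

/-- `ξ^B(u)(x) = x·B(u) − B(ρ(x)u)`. -/
def xiB {K : Type*} [Field K] {A V : Type*}
    [AddCommGroup A] [Module K A] [AddCommGroup V] [Module K V]
    (m : A →ₗ[K] A →ₗ[K] A) (ρ : A →ₗ[K] V →ₗ[K] V) (B : V →ₗ[K] A)
    (u : V) (x : A) : A :=
  m x (B u) - B (ρ x u)

/-- if `B` is a relative Rota-Baxter operator of weight 0, then
`(A; η^B, ξ^B)` is a representation of the associative algebra `(V, ∘)`. -/
theorem stmt15 {K : Type*} [Field K] {A V : Type*}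
    [AddCommGroup A] [Module K A] [AddCommGroup V] [Module K V]
    (m : A →ₗ[K] A →ₗ[K] A)
    (assoc : ∀ x y z : A, m (m x y) z = m x (m y z))
    (ρ μ : A →ₗ[K] V →ₗ[K] V)
    (hρ : ∀ (x y : A) (u : V), ρ (m x y) u = ρ x (ρ y u))
    (hμ : ∀ (x y : A) (u : V), μ (m x y) u = μ y (μ x u))
    (hρμ : ∀ (x y : A) (u : V), ρ x (μ y u) = μ y (ρ x u))
    (B : V →ₗ[K] A)
    (hB : ∀ u v : V, m (B u) (B v) = B (ρ (B u) v + μ (B v) u)) :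
    (∀ (u v : V) (x : A),
      etaB m μ B (circB ρ μ B u v) x = etaB m μ B u (etaB m μ B v x)) ∧
    (∀ (u v : V) (x : A),
      xiB m ρ B (circB ρ μ B u v) x = xiB m ρ B v (xiB m ρ B u x)) ∧
    (∀ (u v : V) (x : A),
      etaB m μ B u (xiB m ρ B v x) = xiB m ρ B v (etaB m μ B u x)) := by
  refine ⟨fun u v x => ?_, fun u v x => ?_, fun u v x => ?_⟩
  · simp only [etaB, circB]
    rw [← hB, assoc]
    simp only [map_add, map_sub, LinearMap.sub_apply, LinearMap.add_apply,
      hB, hμ, hρμ]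
    abel
  · simp only [xiB, circB]
    rw [← hB]
    simp only [map_add, map_sub, LinearMap.sub_apply, LinearMap.add_apply,
      assoc, hB, hρ, hρμ]
    abel
  · simp only [etaB, xiB]
    simp only [map_add, map_sub, LinearMap.sub_apply, LinearMap.add_apply,
      assoc, hB, hρ, hμ]
    abel
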